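/- arXiv:1311.3530 — 4 statements merged into one kernel-verified Lean document; each statement's English description precedes it below -/
import Mathlib

section
/- The greatest fixpoint W of F ↦ P ∩ Force(F) equals the complement of the union of all antagonist attractor levels: W = X \ (⋃ₖ A_k), where A₀ = Pᶜ and A_{k+1} = A_k ∪ { x | ∃ i, ∀ c, δ(x,i,c) ∈ A_k }. -/
theorem gfp_eq_compl_attractor {X I C : Type*} [Finite X]
    (δ : X → I → C → X) (P : Set X)
    (A : ℕ → Set X)
    (hA0 : A 0 = Pᶜ)
    (hAs : ∀ k, A (k + 1) = A k ∪ {x | ∃ i, ∀ c, δ x i c ∈ A k})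
    (W : Set X)
    (hfix : W = P ∩ {x | ∀ i, ∃ c, δ x i c ∈ W})
    (hgreatest : ∀ V : Set X, V = P ∩ {x | ∀ i, ∃ c, δ x i c ∈ V} → V ⊆ W) :
    W = (⋃ k, A k)ᶜ := by
  have hmono : Monotone A := monotone_nat_of_le_succ (fun k => by
    rw [hAs]; exact Set.subset_union_left)
  -- W is disjoint from every A k
  have hdisj : ∀ k, ∀ x ∈ W, x ∉ A k := by
    intro k
    induction k with
    | zero =>
      intro x hx
      rw [hA0]
      have : x ∈ P ∩ {x | ∀ i, ∃ c, δ x i c ∈ W} := hfix ▸ hx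
      simpa using this.1
    | succ k ih =>
      intro x hx
      rw [hAs]
      rintro (h | ⟨i, hc⟩)
      · exact ih x hx h
      · have hx' : x ∈ P ∩ {x | ∀ i, ∃ c, δ x i c ∈ W} := hfix ▸ hx
        obtain ⟨c, hcW⟩ := hx'.2 i
        exact ih _ hcW (hc c)
  -- stabilization
  have hcard : ∀ k, (A k).ncard ≤ Nat.card X := by
    intro k
    simpa [Set.ncard_univ] using Set.ncard_le_ncard (Set.subset_univ (A k)) Set.finite_univ
  have hSnon : (Set.range fun k => (A k).ncard).Nonempty := Set.range_nonempty _
  have hSbdd : BddAbove (Set.range fun k => (A k).ncard) := ⟨Nat.card X, by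
    rintro n ⟨k, rfl⟩; exact hcard k⟩
  obtain ⟨N, hNeq⟩ := Nat.sSup_mem hSnon hSbdd
  have hNmax : ∀ k, (A k).ncard ≤ (A N).ncard := by
    intro k
    have h1 : (A k).ncard ≤ sSup (Set.range fun k => (A k).ncard) :=
      le_csSup hSbdd ⟨k, rfl⟩
    simpa [← hNeq] using h1
  have hstep : A (N + 1) = A N :=
    (Set.eq_of_subset_of_ncard_le (hmono (Nat.le_succ N)) (hNmax _) (Set.toFinite _)).symm
  have hstab : ∀ m, N ≤ m → A m = A N := by
    intro m hm
    induction m with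
    | zero => obtain rfl := Nat.le_zero.mp hm; rfl
    | succ m ih =>
      rcases Nat.lt_or_ge N (m + 1) with h | h
      · have hm' : N ≤ m := Nat.lt_succ_iff.mp h
        rcases Nat.eq_or_lt_of_le hm' with rfl | h'
        · exact hstep
        · rw [hAs, ih hm', ← hAs N, hstep]
      · obtain rfl : N = m + 1 := le_antisymm hm h
        rfl
  have hunion : (⋃ k, A k) = A N := by
    apply Set.eq_of_subset_of_subset
    · apply Set.iUnion_subset
      intro k
      calc A k ⊆ A (max k N) := hmono (le_max_left _ _)
        _ = A N := hstab _ (le_max_right _ _)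
    · exact Set.subset_iUnion A N
  -- A N is closed: the "one-step" set is inside A N
  have hclosed : {x | ∃ i, ∀ c, δ x i c ∈ A N} ⊆ A N := by
    intro x hx
    have := hAs N
    rw [hstep] at this
    rw [this]
    exact Or.inr hx
  have hP : Pᶜ ⊆ A N := hA0 ▸ hmono (Nat.zero_le N)
  -- every A k is inside Pᶜ ∪ one-step(A N)
  have hsub : ∀ k, A k ⊆ Pᶜ ∪ {x | ∃ i, ∀ c, δ x i c ∈ A N} := by
    intro k
    induction k with
    | zero => rw [hA0]; exact Set.subset_union_left
    | succ k ih =>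
      rw [hAs]
      rintro x (h | ⟨i, hc⟩)
      · exact ih h
      · refine Or.inr ⟨i, fun c => ?_⟩
        have : δ x i c ∈ ⋃ k, A k := Set.mem_iUnion.mpr ⟨k, hc c⟩
        rwa [hunion] at this
  -- (A N)ᶜ is a fixpoint
  have hfixV : (A N)ᶜ = P ∩ {x | ∀ i, ∃ c, δ x i c ∈ (A N)ᶜ} := by
    ext x
    constructor
    · intro hx
      refine ⟨by by_contra hP'; exact hx (hP hP'), fun i => ?_⟩
      by_contra hcon
      push_neg at hcon
      exact hx (hclosed ⟨i, fun c => not_not.mp (hcon c)⟩)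
    · rintro ⟨hxP, hi⟩ hx
      rcases hsub N hx with h | ⟨i, hc⟩
      · exact h hxP
      · obtain ⟨c, hcn⟩ := hi i
        exact hcn (hc c)
  have hsubW : (A N)ᶜ ⊆ W := hgreatest _ hfixV
  rw [hunion]
  apply Set.eq_of_subset_of_subset
  · intro x hx
    exact hdisj N x hx
  · exact hsubW
end

section
/- Unrealizability detection is correct: let F be a set with W ⊆ F for every winning region W (every W with Init ⊆ W, W ⊆ P, W ⊆ Force(W)), and suppose there is a state x ∈ Init ∩ F and a set G with x ∈ G and G ⊆ F such that G satisfies the antagonist-escape property G ⊆ ForceA(Fᶜ). Then no winning region exists, i.e., the specification is unrealizable. -/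
theorem unrealizability_detection {X I C : Type*}
    (δ : X → I → C → X) (Init P F : Set X)
    (hover : ∀ W : Set X, Init ⊆ W → W ⊆ P →
      W ⊆ {x | ∀ i, ∃ c, δ x i c ∈ W} → W ⊆ F)
    (x : X) (hx : x ∈ Init ∩ F)
    (G : Set X) (hxG : x ∈ G) (hGF : G ⊆ F)
    (hesc : G ⊆ {x | ∃ i, ∀ c, δ x i c ∈ Fᶜ}) :
    ¬∃ W : Set X, Init ⊆ W ∧ W ⊆ P ∧ W ⊆ {x | ∀ i, ∃ c, δ x i c ∈ W} := by
  rintro ⟨W, hIW, hWP, hWF⟩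
  obtain ⟨i, hi⟩ := hesc hxG
  obtain ⟨c, hc⟩ := hWF (hIW hx.1) i
  exact hi c (hover W hIW hWP hWF hc)
end

section
/- Theorem (soundness of reachability optimization RG): Let G ⊆ X and Xg ⊆ X with Init ⊆ G. Suppose that no state a ∈ G ∩ Xg satisfies both (i) a ∈ Force(G) and (ii) a ∈ Init or a has a predecessor in G \ Xg (i.e., ∃ b ∈ G \ Xg, ∃ i, ∃ c, δ(b,i,c) = a). Then for every winning region W with W ⊆ G, Init ⊆ W, and W ⊆ Force(W), and every controller f realizing W (i.e., δ(x, i, f x i) ∈ W for all x ∈ W, i ∈ I), no state of G ∩ Xg is reachable in the closed-loop system from Init under f. -/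
def Reachable {X I C : Type*} (δ : X → I → C → X) (Init : Set X)
    (f : X → I → C) (a : X) : Prop :=
  ∃ (n : ℕ) (x : ℕ → X) (inp : ℕ → I),
    x 0 ∈ Init ∧
    (∀ k < n, x (k + 1) = δ (x k) (inp k) (f (x k) (inp k))) ∧
    x n = a

theorem rg_optimization_sound {X I C : Type*}
    (δ : X → I → C → X) (Init G Xg : Set X)
    (hIG : Init ⊆ G)
    (hnone : ¬∃ a ∈ G ∩ Xg,
      a ∈ {x | ∀ i, ∃ c, δ x i c ∈ G} ∧
      (a ∈ Init ∨ ∃ b ∈ G \ Xg, ∃ i c, δ b i c = a)) :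
    ∀ (W : Set X) (f : X → I → C),
      W ⊆ G → Init ⊆ W → W ⊆ {x | ∀ i, ∃ c, δ x i c ∈ W} →
      (∀ x ∈ W, ∀ i, δ x i (f x i) ∈ W) →
      ∀ a, Reachable δ Init f a → a ∉ G ∩ Xg := by
  intro W f hWG hIW hWF hf a hreach ha
  obtain ⟨n, x, inp, hx0, hstep, hxn⟩ := hreach
  -- Force(W) ⊆ Force(G)
  have hforce : ∀ y ∈ W, y ∈ {x | ∀ i, ∃ c, δ x i c ∈ G} := by
    intro y hy i
    obtain ⟨c, hc⟩ := hWF hy i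
    exact ⟨c, hWG hc⟩
  have key : ∀ k ≤ n, x k ∈ W ∧ x k ∉ Xg := by
    intro k
    induction k with
    | zero =>
      intro _
      refine ⟨hIW hx0, fun hXg => hnone ⟨x 0, ⟨hIG hx0, hXg⟩, hforce _ (hIW hx0), Or.inl hx0⟩⟩
    | succ k ih =>
      intro hk
      have hk' : k ≤ n := Nat.le_of_succ_le hk
      obtain ⟨hW, hnXg⟩ := ih hk'
      have hstepk := hstep k hk
      have hW' : x (k + 1) ∈ W := hstepk ▸ hf _ hW _
      refine ⟨hW', fun hXg => hnone ⟨x (k + 1), ⟨hWG hW', hXg⟩, hforce _ hW',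
        Or.inr ⟨x k, ⟨hWG hW, hnXg⟩, inp k, f (x k) (inp k), hstepk.symm⟩⟩⟩
  exact (hxn ▸ (key n le_rfl).2) ha.2
end

section
/- Theorem (optimization RC preserves unrealizability detection): suppose no winning region exists (no W with Init ⊆ W, W ⊆ P, W ⊆ Force(W)), and let F be a set with Init ⊆ F and F ⊆ P such that every winning-region candidate is contained in F. Then there exists a state x ∈ F with x ∈ ForceA(Fᶜ) such that either x ∈ Init, or x has a predecessor in F distinct from x (∃ y ∈ F, y ≠ x, ∃ i c, δ(y,i,c) = x). -/
theorem rc_preserves_unrealizability {X I C : Type*} [Finite X]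
    (δ : X → I → C → X) (Init P F : Set X)
    (hunreal : ¬∃ W : Set X, Init ⊆ W ∧ W ⊆ P ∧
      W ⊆ {x | ∀ i, ∃ c, δ x i c ∈ W})
    (hIF : Init ⊆ F) (hFP : F ⊆ P)
    (hover : ∀ V : Set X, V ⊆ P → V ⊆ {x | ∀ i, ∃ c, δ x i c ∈ V} → V ⊆ F)
    (hnotclosed : ¬F ⊆ {x | ∀ i, ∃ c, δ x i c ∈ F}) :
    ∃ x ∈ F, x ∈ {x | ∃ i, ∀ c, δ x i c ∈ Fᶜ} ∧
      (x ∈ Init ∨ ∃ y ∈ F, y ≠ x ∧ ∃ i c, δ y i c = x) := by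
  by_contra hcon
  push_neg at hcon
  apply hunreal
  refine ⟨{x | x ∈ F ∧ ∀ i, ∃ c, δ x i c ∈ F}, ?_, ?_, ?_⟩
  · intro x hx
    refine ⟨hIF hx, ?_⟩
    by_contra hesc
    push_neg at hesc
    obtain ⟨i, hi⟩ := hesc
    exact (hcon x (hIF hx) ⟨i, fun c => hi c⟩).1 hx
  · intro x hx
    exact hFP hx.1
  · rintro x ⟨hxF, hxcl⟩ i
    obtain ⟨c, hc⟩ := hxcl i
    refine ⟨c, hc, ?_⟩
    by_contra hesc
    push_neg at hesc
    obtain ⟨i', hi'⟩ := hesc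
    have hbad := hcon (δ x i c) hc ⟨i', fun c' => hi' c'⟩
    have hx_eq : x = δ x i c := by
      by_contra hne
      exact hbad.2 x hxF hne i c rfl
    obtain ⟨c', hc'⟩ := hxcl i'
    exact (hi' c') (hx_eq ▸ hc')
end
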